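/- Let K_Y be a symmetric positive semidefinite d×d matrix, let r ≤ d, fix λ > 0, and define f(x) = (λ/2)·ln( max{x, λ/2} / (λ/2) ) − max{x, λ/2} for x ≥ 0. Then the minimum of Σ_{i=1}^r f(Λ_i) over all U ∈ ℝ^{d×r} with UᵀU = I_r and UᵀK_Y U = diag(Λ_1, …, Λ_r) equals Σ_{i=1}^r f(λ_i(K_Y)), where λ_1(K_Y) ≥ … ≥ λ_r(K_Y) are the top r eigenvalues of K_Y; the minimum is attained when the columns of U are the top r eigenvectors of K_Y. -/

import Mathlib

open MeasureTheory ProbabilityTheory Matrix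
open scoped ENNReal NNReal Classical

noncomputable section

abbrev Evec (d : ℕ) := EuclideanSpace ℝ (Fin d)

/-- Couplings: joint measures with prescribed marginals. -/
def IsCoupling {E F : Type*} [MeasurableSpace E] [MeasurableSpace F]
    (π : Measure (E × F)) (P : Measure E) (Q : Measure F) : Prop :=
  π.fst = P ∧ π.snd = Q

/-- KL divergence valued in `ℝ≥0∞` (junk value `⊤` when not absolutely continuous
or not integrable). -/
def klDivNN {E : Type*} [MeasurableSpace E] (μ ν : Measure E) : ℝ≥0∞ :=
  if μ ≪ ν ∧ Integrable (fun x => Real.log (μ.rnDeriv ν x).toReal) μ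
  then ENNReal.ofReal (∫ x, Real.log (μ.rnDeriv ν x).toReal ∂μ)
  else ⊤

/-- Mutual information of a joint measure. -/
def mutInfo {E F : Type*} [MeasurableSpace E] [MeasurableSpace F]
    (π : Measure (E × F)) : ℝ≥0∞ :=
  if h : SFinite π.snd then klDivNN π (haveI := h; π.fst.prod π.snd) else ⊤

/-- Entropy-regularized squared 2-Wasserstein distance. -/
def entW2 {d : ℕ} (lam : ℝ) (P Q : Measure (Evec d)) : ℝ :=
  sInf {c : ℝ | ∃ π : Measure (Evec d × Evec d), IsCoupling π P Q ∧ mutInfo π ≠ ⊤ ∧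
    Integrable (fun p => ‖p.1 - p.2‖ ^ 2) π ∧
    c = ∫ p, ‖p.1 - p.2‖ ^ 2 ∂π + lam * (mutInfo π).toReal}

/-- Sinkhorn divergence. -/
def sinkhornDiv {d : ℕ} (lam : ℝ) (P Q : Measure (Evec d)) : ℝ :=
  entW2 lam P Q - (entW2 lam P P + entW2 lam Q Q) / 2

/-- Standard Gaussian on `ℝ^r`. -/
def stdGaussian (r : ℕ) : Measure (Evec r) :=
  Measure.map (⇑(EuclideanSpace.equiv (Fin r) ℝ).symm)
    (Measure.pi fun _ : Fin r => gaussianReal 0 1)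

/-- The map `x ↦ G x` of a matrix acting on Euclidean space. -/
def matVecMap {d r : ℕ} (G : Matrix (Fin d) (Fin r) ℝ) : Evec r → Evec d :=
  fun x => (EuclideanSpace.equiv (Fin d) ℝ).symm (G.mulVec (EuclideanSpace.equiv (Fin r) ℝ x))

/-- The positive semidefinite square root of a positive semidefinite matrix
(the definition `Matrix.PosSemidef.sqrt` of the older Mathlib, removed since). -/
def Matrix.PosSemidef.sqrt {n 𝕜 : Type*} [Fintype n] [DecidableEq n] [RCLike 𝕜] [PartialOrder 𝕜]
    {A : Matrix n n 𝕜} (hA : A.PosSemidef) : Matrix n n 𝕜 :=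
  (hA.1.eigenvectorUnitary : Matrix n n 𝕜) *
    diagonal (fun i => ((Real.sqrt (hA.1.eigenvalues i) : ℝ) : 𝕜)) *
    (star hA.1.eigenvectorUnitary : Matrix n n 𝕜)

/-- Centered Gaussian measure with covariance `K`. -/
def gaussianOfCov {d : ℕ} (K : Matrix (Fin d) (Fin d) ℝ) (hK : K.PosSemidef) :
    Measure (Evec d) :=
  Measure.map (matVecMap hK.sqrt) (stdGaussian d)

/-- Covariance matrix of a measure on `ℝ^d`. -/
def covMatrix {d : ℕ} (μ : Measure (Evec d)) : Matrix (Fin d) (Fin d) ℝ :=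
  Matrix.of fun i j => ∫ x, (x i - ∫ y, y i ∂μ) * (x j - ∫ y, y j ∂μ) ∂μ

/-- The sub-gaussian condition with parameter `s` for a measure on `ℝ^d`. -/
def IsSubG {d : ℕ} (μ : Measure (Evec d)) (s : ℝ) : Prop :=
  ∫ x, Real.exp (‖x‖ ^ 2 / (2 * d * s)) ∂μ ≤ 2

/-- The sub-gaussian parameter `σ²(X)` of a measure on `ℝ^d`. -/
def subgParam {d : ℕ} (μ : Measure (Evec d)) : ℝ :=
  sInf {s : ℝ | 0 < s ∧ IsSubG μ s}

/-- Empirical measure of a sample. -/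
def empMeasure {d : ℕ} (n : ℕ) (y : Fin n → Evec d) : Measure (Evec d) :=
  (n : ℝ≥0∞)⁻¹ • ∑ i : Fin n, Measure.dirac (y i)

/-- `u` is an orthonormal eigenbasis of `K` with eigenvalues `μ` in decreasing order. -/
def IsEigenDecomp {d : ℕ} (K : Matrix (Fin d) (Fin d) ℝ)
    (u : Fin d → Evec d) (μ : Fin d → ℝ) : Prop :=
  Orthonormal ℝ u ∧ Antitone μ ∧ ∀ i, matVecMap K (u i) = μ i • u i

/-!
The function `f(x) = (λ/2) log (max{x, λ/2} / (λ/2)) - max{x, λ/2}` is nonincreasing, because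
`y ↦ c log y - y` decreases for `y ≥ c`. So it suffices that, once the diagonal entries `Λ` of an
orthonormal frame diagonalizing the compression of `K_Y` are sorted decreasingly, `Λ_i ≤ λ_i(K_Y)`.
This is Cauchy interlacing. The top `r` eigenvectors form such a frame, with `Λ_i = λ_i(K_Y)`.
-/

open scoped InnerProductSpace
open Module

theorem antitone_mul_log_max_div_sub_max {c : ℝ} (hc : 0 < c) :
    Antitone fun x : ℝ => c * Real.log (max x c / c) - max x c := by
  intro a b hab
  set A := max a c
  set B := max b c
  have hcA : c ≤ A := le_max_right a c
  have hAB : A ≤ B := max_le_max_right c hab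
  have hA : 0 < A := hc.trans_le hcA
  have hlog : c * Real.log (B / A) ≤ A * (B / A - 1) :=
    mul_le_mul hcA (Real.log_le_sub_one_of_pos (by positivity))
      (Real.log_nonneg ((one_le_div hA).2 hAB)) hA.le
  calc c * Real.log (B / c) - B = c * Real.log (A / c) + c * Real.log (B / A) - B := by
        rw [← mul_add, ← Real.log_mul (by positivity) (by positivity),
          show A / c * (B / A) = B / c by field_simp]
    _ ≤ c * Real.log (A / c) + A * (B / A - 1) - B := by linarith
    _ = c * Real.log (A / c) - A := by field_simp; ring

theorem exists_perm_antitone_comp {n : ℕ} {α : Type*} [LinearOrder α] (f : Fin n → α) :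
    ∃ σ : Equiv.Perm (Fin n), Antitone (f ∘ σ) :=
  ⟨_, Tuple.monotone_sort (OrderDual.toDual ∘ f)⟩

section DiagonalFrame

variable {E : Type*} [NormedAddCommGroup E] [InnerProductSpace ℝ E] {ι κ : Type*}

theorem Orthonormal.norm_sum_smul_sq [Fintype ι] {v : ι → E} (hv : Orthonormal ℝ v)
    (c : ι → ℝ) : ‖∑ a, c a • v a‖ ^ 2 = ∑ a, c a ^ 2 := by
  rw [← real_inner_self_eq_norm_sq, hv.inner_sum]
  simp [sq]

def IsDiagonalFrame (T : E →ₗ[ℝ] E) (v : ι → E) (Λ : ι → ℝ) : Prop :=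
  Orthonormal ℝ v ∧ (∀ a, ⟪v a, T (v a)⟫_ℝ = Λ a) ∧ Pairwise fun a b => ⟪v a, T (v b)⟫_ℝ = 0

namespace IsDiagonalFrame

variable {T : E →ₗ[ℝ] E} {v : ι → E} {Λ : ι → ℝ}

theorem comp (h : IsDiagonalFrame T v Λ) (f : κ → ι) (hf : Function.Injective f) :
    IsDiagonalFrame T (v ∘ f) (Λ ∘ f) :=
  ⟨h.1.comp f hf, fun a => h.2.1 (f a), fun _ _ hab => h.2.2 (hf.ne hab)⟩

variable [Fintype ι]

theorem inner_sum_map_sum (h : IsDiagonalFrame T v Λ) (c : ι → ℝ) :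
    ⟪∑ a, c a • v a, T (∑ b, c b • v b)⟫_ℝ = ∑ a, Λ a * c a ^ 2 := by
  simp_rw [map_sum, map_smul, sum_inner, inner_sum, real_inner_smul_left, real_inner_smul_right]
  refine Finset.sum_congr rfl fun a _ => ?_
  rw [Finset.sum_eq_single a (fun b _ hba => by rw [h.2.2 hba.symm]; ring) (by simp), h.2.1 a]
  ring

theorem mul_norm_sq_le_inner_map_self (h : IsDiagonalFrame T v Λ) {m : ℝ} (hm : ∀ a, m ≤ Λ a)
    {x : E} (hx : x ∈ Submodule.span ℝ (Set.range v)) : m * ‖x‖ ^ 2 ≤ ⟪x, T x⟫_ℝ := by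
  obtain ⟨c, rfl⟩ := (Submodule.mem_span_range_iff_exists_fun ℝ).1 hx
  rw [h.inner_sum_map_sum, h.1.norm_sum_smul_sq, Finset.mul_sum]
  exact Finset.sum_le_sum fun a _ => mul_le_mul_of_nonneg_right (hm a) (sq_nonneg _)

theorem inner_map_self_le_mul_norm_sq (h : IsDiagonalFrame T v Λ) {M : ℝ} (hM : ∀ a, Λ a ≤ M)
    {x : E} (hx : x ∈ Submodule.span ℝ (Set.range v)) : ⟪x, T x⟫_ℝ ≤ M * ‖x‖ ^ 2 := by
  obtain ⟨c, rfl⟩ := (Submodule.mem_span_range_iff_exists_fun ℝ).1 hx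
  rw [h.inner_sum_map_sum, h.1.norm_sum_smul_sq, Finset.mul_sum]
  exact Finset.sum_le_sum fun a _ => mul_le_mul_of_nonneg_right (hM a) (sq_nonneg _)

end IsDiagonalFrame

theorem le_of_inner_map_self_bounds [FiniteDimensional ℝ E] (T : E →ₗ[ℝ] E)
    {V W : Submodule ℝ E} (hdim : finrank ℝ E < finrank ℝ V + finrank ℝ W) {m M : ℝ}
    (hV : ∀ x ∈ V, m * ‖x‖ ^ 2 ≤ ⟪x, T x⟫_ℝ) (hW : ∀ x ∈ W, ⟪x, T x⟫_ℝ ≤ M * ‖x‖ ^ 2) :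
    m ≤ M := by
  have hVW : ¬Disjoint V W := fun h =>
    hdim.not_ge (Submodule.finrank_add_finrank_le_of_disjoint h)
  obtain ⟨x, hxV, hxW, hx⟩ : ∃ x ∈ V, x ∈ W ∧ x ≠ 0 := by
    simpa [Submodule.disjoint_def] using hVW
  exact le_of_mul_le_mul_right ((hV x hxV).trans (hW x hxW)) (by positivity)

/-- Cauchy interlacing, by the Courant–Fischer dimension count: the span of `w 0, …, w i` meets
the span of `u i, …, u (n - 1)` nontrivially. -/
theorem IsDiagonalFrame.le_castLE_of_antitone [FiniteDimensional ℝ E] {T : E →ₗ[ℝ] E}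
    {r n : ℕ} {w : Fin r → E} {Λ : Fin r → ℝ} {u : Fin n → E} {μ : Fin n → ℝ}
    (hw : IsDiagonalFrame T w Λ) (hΛ : Antitone Λ) (hu : IsDiagonalFrame T u μ)
    (hμ : Antitone μ) (hE : finrank ℝ E ≤ n) (hr : r ≤ n) (i : Fin r) :
    Λ i ≤ μ (Fin.castLE hr i) := by
  have hw' := hw.comp ((↑) : Set.Iic i → Fin r) Subtype.val_injective
  have hu' := hu.comp ((↑) : Set.Ici (Fin.castLE hr i) → Fin n) Subtype.val_injective
  refine le_of_inner_map_self_bounds T ?_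
    (fun x hx => hw'.mul_norm_sq_le_inner_map_self (fun a => hΛ a.2) hx)
    (fun x hx => hu'.inner_map_self_le_mul_norm_sq (fun a => hμ a.2) hx)
  rw [finrank_span_eq_card hw'.1.linearIndependent, finrank_span_eq_card hu'.1.linearIndependent,
    Fintype.card_Iic, Fintype.card_Ici, Fin.card_Iic, Fin.card_Ici, Fin.val_castLE]
  omega

end DiagonalFrame

theorem isDiagonalFrame_toEuclideanLin_cols_iff {m n : Type*} [Fintype m] [DecidableEq m]
    [DecidableEq n] (K : Matrix m m ℝ) (U : Matrix m n ℝ) (Λ : n → ℝ) :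
    IsDiagonalFrame (toEuclideanLin K) (fun j => WithLp.toLp 2 fun i => U i j) Λ ↔
      Uᵀ * U = 1 ∧ Uᵀ * K * U = diagonal Λ := by
  have inner_cols : ∀ a b, ⟪WithLp.toLp 2 (fun i => U i a), WithLp.toLp 2 fun i => U i b⟫_ℝ =
      (Uᵀ * U) a b := by
    intro a b
    simp [EuclideanSpace.inner_toLp_toLp, Matrix.mul_apply, dotProduct, mul_comm]
  have inner_cols_map : ∀ a b, ⟪WithLp.toLp 2 (fun i => U i a),
      toEuclideanLin K (WithLp.toLp 2 fun i => U i b)⟫_ℝ = (Uᵀ * K * U) a b := by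
    intro a b
    simp only [toLpLin_toLp, toLin'_apply, EuclideanSpace.inner_toLp_toLp, dotProduct, mulVec,
      Pi.star_apply, star_trivial, Finset.sum_mul, Matrix.mul_apply, transpose_apply]
    rw [Finset.sum_comm]
    exact Finset.sum_congr rfl fun _ _ => Finset.sum_congr rfl fun _ _ => by ring
  simp only [IsDiagonalFrame, orthonormal_iff_ite, inner_cols, inner_cols_map]
  constructor
  · rintro ⟨hU, hdiag, hoff⟩
    refine ⟨Matrix.ext fun a b => by rw [hU, Matrix.one_apply], Matrix.ext fun a b => ?_⟩
    by_cases hab : a = b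
    · subst hab
      simp [hdiag]
    · simp [hoff hab, hab]
  · rintro ⟨hU, hdiag⟩
    exact ⟨fun a b => by rw [hU, Matrix.one_apply], fun a => by simp [hdiag],
      fun a b hab => by simp [hdiag, hab]⟩

theorem IsEigenDecomp.isDiagonalFrame {d : ℕ} {K : Matrix (Fin d) (Fin d) ℝ} {u : Fin d → Evec d}
    {μ : Fin d → ℝ} (h : IsEigenDecomp K u μ) : IsDiagonalFrame (toEuclideanLin K) u μ := by
  obtain ⟨hu, -, hKu⟩ := h
  have hKu' : ∀ b, toEuclideanLin K (u b) = μ b • u b := hKu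
  refine ⟨hu, fun a => ?_, fun a b hab => ?_⟩
  · rw [hKu', real_inner_smul_right, real_inner_self_eq_norm_sq, hu.1 a]; ring
  · dsimp only
    rw [hKu', real_inner_smul_right, hu.2 hab, mul_zero]

theorem optimal_frame_top_eigenvectors_general
    (d r : ℕ) (hr : r ≤ d) (lam : ℝ) (hlam : 0 < lam)
    (KY : Matrix (Fin d) (Fin d) ℝ)
    (u : Fin d → Evec d) (μ : Fin d → ℝ) (heig : IsEigenDecomp KY u μ) :
    IsLeast {c : ℝ | ∃ (U : Matrix (Fin d) (Fin r) ℝ) (Λ : Fin r → ℝ),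
        Uᵀ * U = 1 ∧ Uᵀ * KY * U = Matrix.diagonal Λ ∧
        c = ∑ i : Fin r, (lam / 2 * Real.log (max (Λ i) (lam / 2) / (lam / 2)) -
          max (Λ i) (lam / 2))}
      (∑ i : Fin r, (lam / 2 *
          Real.log (max (μ (Fin.castLE hr i)) (lam / 2) / (lam / 2)) -
        max (μ (Fin.castLE hr i)) (lam / 2))) ∧
    ((Matrix.of fun i j => u (Fin.castLE hr j) i)ᵀ *
        (Matrix.of fun i j => u (Fin.castLE hr j) i) = 1 ∧
      (Matrix.of fun i j => u (Fin.castLE hr j) i)ᵀ * KY *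
          (Matrix.of fun i j => u (Fin.castLE hr j) i) =
        Matrix.diagonal fun i => μ (Fin.castLE hr i)) := by
  have hf := antitone_mul_log_max_div_sub_max (half_pos hlam)
  have hu := heig.isDiagonalFrame
  obtain ⟨hU₀, hdiag₀⟩ := (isDiagonalFrame_toEuclideanLin_cols_iff KY
    (Matrix.of fun i j => u (Fin.castLE hr j) i) (μ ∘ Fin.castLE hr)).1
    (hu.comp _ (Fin.castLE_injective hr))
  refine ⟨⟨⟨_, _, hU₀, hdiag₀, rfl⟩, ?_⟩, hU₀, hdiag₀⟩
  rintro _ ⟨U, Λ, hU, hdiag, rfl⟩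
  obtain ⟨σ, hσ⟩ := exists_perm_antitone_comp Λ
  have hw := ((isDiagonalFrame_toEuclideanLin_cols_iff KY U Λ).2 ⟨hU, hdiag⟩).comp σ σ.injective
  conv_rhs => rw [← Equiv.sum_comp σ]
  exact Finset.sum_le_sum fun i _ =>
    hf (hw.le_castLE_of_antitone hσ hu heig.2.1 (by simp) hr i)

/-- **Optimal frame for the reduced objective.**
For `f(x) = (λ/2)ln(max{x,λ/2}/(λ/2)) − max{x,λ/2}`, the minimum of `∑ᵢ f(Λᵢ)` over all
`U ∈ ℝ^{d×r}` with `UᵀU = I_r` and `UᵀK_YU = diag(Λ)` equals `∑ᵢ f(λᵢ(K_Y))` for the top `r`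
eigenvalues of `K_Y`, attained when the columns of `U` are the top `r` eigenvectors. -/
theorem optimal_frame_top_eigenvectors
    (d r : ℕ) (hr : r ≤ d) (lam : ℝ) (hlam : 0 < lam)
    (KY : Matrix (Fin d) (Fin d) ℝ) (hKY : KY.PosSemidef)
    (u : Fin d → Evec d) (μ : Fin d → ℝ) (heig : IsEigenDecomp KY u μ) :
    IsLeast {c : ℝ | ∃ (U : Matrix (Fin d) (Fin r) ℝ) (Λ : Fin r → ℝ),
        Uᵀ * U = 1 ∧ Uᵀ * KY * U = Matrix.diagonal Λ ∧
        c = ∑ i : Fin r, (lam / 2 * Real.log (max (Λ i) (lam / 2) / (lam / 2)) -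
          max (Λ i) (lam / 2))}
      (∑ i : Fin r, (lam / 2 *
          Real.log (max (μ (Fin.castLE hr i)) (lam / 2) / (lam / 2)) -
        max (μ (Fin.castLE hr i)) (lam / 2))) ∧
    ((Matrix.of fun i j => u (Fin.castLE hr j) i)ᵀ *
        (Matrix.of fun i j => u (Fin.castLE hr j) i) = 1 ∧
      (Matrix.of fun i j => u (Fin.castLE hr j) i)ᵀ * KY *
          (Matrix.of fun i j => u (Fin.castLE hr j) i) =
        Matrix.diagonal fun i => μ (Fin.castLE hr i)) :=
  optimal_frame_top_eigenvectors_general d r hr lam hlam KY u μ heig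

end
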